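/- Let A* = G* ×₁ U₁* ×₂ U₂* and A = G ×₁ U₁ ×₂ U₂ be N×N×T₀ tensors with core tensors G*, G ∈ ℝ^{r₁×r₂×T₀} and factor matrices U_i*, U_i ∈ ℝ^{N×r_i}, where U_i*ᵀU_i* = b²I_{r_i}. Suppose ‖U_i‖_op ≤ (1+c_e)σ_U^{1/4} and ‖G_{(i)}‖_op ≤ (1+c_e)σ_U^{1/2} for i = 1, 2, with c_e > 0, b > 0, σ_U > 0. Then for any orthogonal matrices R_i ∈ ℝ^{r_i×r_i}: ‖G − G* ×₁ R₁ᵀ ×₂ R₂ᵀ‖_F² ≤ 3 b^{-4} ‖A − A*‖_F² + 3(1+c_e)⁴ σ_U^{3/2} b^{-4} Σ_{i=1}^{2} ‖U_i − U_i* R_i‖_F². -/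

import Mathlib

open Matrix

/-- Frobenius norm of a real matrix. -/
noncomputable def frob {m n : Type*} [Fintype m] [Fintype n] (M : Matrix m n ℝ) : ℝ :=
  Real.sqrt (∑ i, ∑ j, (M i j) ^ 2)

/-- Operator (spectral) norm of a real matrix, via its action between Euclidean spaces. -/
noncomputable def opNorm {m n : Type*} [Fintype m] [Fintype n] [DecidableEq m] [DecidableEq n]
    (A : Matrix m n ℝ) : ℝ :=
  ‖LinearMap.toContinuousLinearMap (Matrix.toEuclideanLin A)‖

/-- Mode-1 matricization of a third-order tensor given by its frontal slices. -/
def mat1 {r₁ r₂ T₀ : ℕ} (G : Fin T₀ → Matrix (Fin r₁) (Fin r₂) ℝ) :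
    Matrix (Fin r₁) (Fin T₀ × Fin r₂) ℝ :=
  fun i jk => G jk.1 i jk.2

/-- Mode-2 matricization of a third-order tensor given by its frontal slices. -/
def mat2 {r₁ r₂ T₀ : ℕ} (G : Fin T₀ → Matrix (Fin r₁) (Fin r₂) ℝ) :
    Matrix (Fin r₂) (Fin T₀ × Fin r₁) ℝ :=
  fun i jk => G jk.1 jk.2 i

/-! With `Vᵢ = Uᵢ* Rᵢ` one still has `Vᵢᵀ Vᵢ = b² I`, so `X ↦ V₁ X V₂ᵀ` scales Frobenius norms
by `b²`. Applied to `X = G_j − R₁ᵀ G*_j R₂` it gives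
`(U₁ G_j U₂ᵀ − U₁* G*_j U₂*ᵀ) − (U₁ − V₁) G_j U₂ᵀ − V₁ G_j (U₂ − V₂)ᵀ`, and
`‖x − y − z‖² ≤ 3‖x‖² + 3‖y‖² + 3‖z‖²`. Summed over the slices `j`, the second term is at most
`‖U₂‖²_op ‖(U₁ − V₁) G₍₁₎‖²_F` and the third equals `b² ‖(U₂ − V₂) G₍₂₎‖²_F`; then
`‖A B‖_F ≤ ‖A‖_op ‖B‖_F` finishes. -/

section FrobeniusBounds

variable {m n p : Type*} [Fintype m] [Fintype n] [Fintype p]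

lemma frob_sq (M : Matrix m n ℝ) : frob M ^ 2 = ∑ i, ∑ j, M i j ^ 2 :=
  Real.sq_sqrt (by positivity)

lemma frob_transpose (M : Matrix m n ℝ) : frob Mᵀ = frob M := by
  rw [frob, frob, Finset.sum_comm]
  rfl

lemma frob_sq_eq_trace (M : Matrix m n ℝ) : frob M ^ 2 = (Mᵀ * M).trace := by
  rw [frob_sq, Finset.sum_comm]
  simp [Matrix.trace, Matrix.mul_apply, sq]

lemma frob_sub_sub_sq_le (X Y Z : Matrix m n ℝ) :
    frob (X - Y - Z) ^ 2 ≤ 3 * frob X ^ 2 + 3 * frob Y ^ 2 + 3 * frob Z ^ 2 := by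
  simp only [frob_sq, Finset.mul_sum, ← Finset.sum_add_distrib, Matrix.sub_apply]
  gcongr with i _ j _
  nlinarith [sq_nonneg (X i j + Y i j), sq_nonneg (X i j + Z i j), sq_nonneg (Y i j - Z i j)]

lemma frob_mul_sq_of_transpose_mul_self {r : Type*} [Fintype r] [DecidableEq r]
    {V : Matrix m r ℝ} {a : ℝ} (hV : Vᵀ * V = a • (1 : Matrix r r ℝ)) (Y : Matrix r p ℝ) :
    frob (V * Y) ^ 2 = a * frob Y ^ 2 := by
  rw [frob_sq_eq_trace, frob_sq_eq_trace, Matrix.transpose_mul, Matrix.mul_assoc,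
    ← Matrix.mul_assoc Vᵀ, hV, Matrix.smul_mul, Matrix.one_mul, Matrix.mul_smul,
    Matrix.trace_smul, smul_eq_mul]

lemma frob_mul_mul_transpose_sq {r₁ r₂ : Type*} [Fintype r₁] [DecidableEq r₁] [Fintype r₂]
    [DecidableEq r₂] {V₁ : Matrix m r₁ ℝ} {V₂ : Matrix p r₂ ℝ} {a c : ℝ}
    (hV₁ : V₁ᵀ * V₁ = a • (1 : Matrix r₁ r₁ ℝ)) (hV₂ : V₂ᵀ * V₂ = c • (1 : Matrix r₂ r₂ ℝ))
    (X : Matrix r₁ r₂ ℝ) :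
    frob (V₁ * X * V₂ᵀ) ^ 2 = a * c * frob X ^ 2 := by
  rw [Matrix.mul_assoc, frob_mul_sq_of_transpose_mul_self hV₁, ← frob_transpose (X * V₂ᵀ),
    Matrix.transpose_mul, Matrix.transpose_transpose, frob_mul_sq_of_transpose_mul_self hV₂,
    frob_transpose, mul_assoc]

lemma opNorm_nonneg [DecidableEq m] [DecidableEq n] (A : Matrix m n ℝ) : 0 ≤ opNorm A :=
  norm_nonneg _

open scoped Matrix.Norms.L2Operator in
lemma opNorm_transpose [DecidableEq m] [DecidableEq n] (A : Matrix m n ℝ) :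
    opNorm Aᵀ = opNorm A :=
  Matrix.l2_opNorm_conjTranspose A

open scoped Matrix.Norms.L2Operator in
lemma sum_sq_mulVec_le [DecidableEq m] [DecidableEq n] (A : Matrix m n ℝ) (v : n → ℝ) :
    ∑ i, (A *ᵥ v) i ^ 2 ≤ opNorm A ^ 2 * ∑ j, v j ^ 2 := by
  have h := pow_le_pow_left₀ (norm_nonneg _) (Matrix.l2_opNorm_mulVec A (WithLp.toLp 2 v)) 2
  simp only [mul_pow, EuclideanSpace.norm_sq_eq, Real.norm_eq_abs, sq_abs] at h
  exact h

lemma frob_mul_sq_le_left [DecidableEq m] [DecidableEq n] (A : Matrix m n ℝ)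
    (M : Matrix n p ℝ) :
    frob (A * M) ^ 2 ≤ opNorm A ^ 2 * frob M ^ 2 := by
  rw [frob_sq, frob_sq, Finset.sum_comm, Finset.sum_comm (f := fun i j => M i j ^ 2),
    Finset.mul_sum]
  gcongr with k _
  simpa [Matrix.mulVec, Matrix.mul_apply, dotProduct] using sum_sq_mulVec_le A (fun l => M l k)

lemma frob_mul_sq_le_right [DecidableEq n] [DecidableEq p] (M : Matrix m n ℝ)
    (A : Matrix n p ℝ) :
    frob (M * A) ^ 2 ≤ opNorm A ^ 2 * frob M ^ 2 := by
  simpa only [← Matrix.transpose_mul, frob_transpose, opNorm_transpose] using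
    frob_mul_sq_le_left Aᵀ Mᵀ

end FrobeniusBounds

section Matricization

variable {m : Type*} [Fintype m] {r₁ r₂ T₀ : ℕ}

lemma sum_frob_mul_sq_eq_mat1 (M : Matrix m (Fin r₁) ℝ)
    (G : Fin T₀ → Matrix (Fin r₁) (Fin r₂) ℝ) :
    ∑ j, frob (M * G j) ^ 2 = frob (M * mat1 G) ^ 2 := by
  have h : ∀ i jk, (M * mat1 G) i jk = (M * G jk.1) i jk.2 := fun _ _ => rfl
  simp only [frob_sq, h, Fintype.sum_prod_type]
  exact Finset.sum_comm

lemma sum_frob_mul_transpose_sq_eq_mat2 (M : Matrix m (Fin r₂) ℝ)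
    (G : Fin T₀ → Matrix (Fin r₁) (Fin r₂) ℝ) :
    ∑ j, frob (M * (G j)ᵀ) ^ 2 = frob (M * mat2 G) ^ 2 := by
  have h : ∀ i jk, (M * mat2 G) i jk = (M * (G jk.1)ᵀ) i jk.2 := fun _ _ => rfl
  simp only [frob_sq, h, Fintype.sum_prod_type]
  exact Finset.sum_comm

variable {n : Type*} [Fintype n]

lemma sum_frob_mul_mul_transpose_sq_le [DecidableEq n] (E : Matrix m (Fin r₁) ℝ)
    (U : Matrix n (Fin r₂) ℝ) (G : Fin T₀ → Matrix (Fin r₁) (Fin r₂) ℝ) :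
    ∑ j, frob (E * G j * Uᵀ) ^ 2 ≤ opNorm U ^ 2 * opNorm (mat1 G) ^ 2 * frob E ^ 2 :=
  calc ∑ j, frob (E * G j * Uᵀ) ^ 2 ≤ ∑ j, opNorm U ^ 2 * frob (E * G j) ^ 2 := by
        gcongr with j _
        simpa only [opNorm_transpose] using frob_mul_sq_le_right (E * G j) Uᵀ
    _ = opNorm U ^ 2 * frob (E * mat1 G) ^ 2 := by
        rw [← Finset.mul_sum, sum_frob_mul_sq_eq_mat1]
    _ ≤ opNorm U ^ 2 * (opNorm (mat1 G) ^ 2 * frob E ^ 2) := by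
        gcongr
        exact frob_mul_sq_le_right E (mat1 G)
    _ = opNorm U ^ 2 * opNorm (mat1 G) ^ 2 * frob E ^ 2 := by ring

lemma sum_frob_mul_mul_transpose_sq_le_of_transpose_mul_self {V : Matrix m (Fin r₁) ℝ} {a : ℝ}
    (ha : 0 ≤ a) (hV : Vᵀ * V = a • (1 : Matrix (Fin r₁) (Fin r₁) ℝ)) (E : Matrix n (Fin r₂) ℝ)
    (G : Fin T₀ → Matrix (Fin r₁) (Fin r₂) ℝ) :
    ∑ j, frob (V * G j * Eᵀ) ^ 2 ≤ a * opNorm (mat2 G) ^ 2 * frob E ^ 2 :=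
  calc ∑ j, frob (V * G j * Eᵀ) ^ 2 = a * ∑ j, frob (E * (G j)ᵀ) ^ 2 := by
        simp only [Matrix.mul_assoc, frob_mul_sq_of_transpose_mul_self hV, ← Finset.mul_sum,
          ← frob_transpose (G _ * Eᵀ), Matrix.transpose_mul, Matrix.transpose_transpose]
    _ = a * frob (E * mat2 G) ^ 2 := by rw [sum_frob_mul_transpose_sq_eq_mat2]
    _ ≤ a * (opNorm (mat2 G) ^ 2 * frob E ^ 2) := by
        gcongr
        exact frob_mul_sq_le_right E (mat2 G)
    _ = a * opNorm (mat2 G) ^ 2 * frob E ^ 2 := by ring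

end Matricization

lemma transpose_mul_self_mul_of_orthogonal {m r : Type*} [Fintype m] [Fintype r] [DecidableEq r]
    {U : Matrix m r ℝ} {R : Matrix r r ℝ} {a : ℝ} (hU : Uᵀ * U = a • (1 : Matrix r r ℝ))
    (hR : Rᵀ * R = 1) : (U * R)ᵀ * (U * R) = a • (1 : Matrix r r ℝ) := by
  rw [Matrix.transpose_mul, Matrix.mul_assoc, ← Matrix.mul_assoc Uᵀ, hU, Matrix.smul_mul,
    Matrix.one_mul, Matrix.mul_smul, hR]

lemma mul_sub_mul_mul_transpose_eq {α m n r₁ r₂ : Type*} [CommRing α]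
    [Fintype r₁] [Fintype r₂] [DecidableEq r₁] [DecidableEq r₂]
    (U₁ U₁s : Matrix m r₁ α) (U₂ U₂s : Matrix n r₂ α) {R₁ : Matrix r₁ r₁ α}
    {R₂ : Matrix r₂ r₂ α} (hR₁ : R₁ * R₁ᵀ = 1) (hR₂ : R₂ * R₂ᵀ = 1) (G Gs : Matrix r₁ r₂ α) :
    U₁s * R₁ * (G - R₁ᵀ * Gs * R₂) * (U₂s * R₂)ᵀ =
      (U₁ * G * U₂ᵀ - U₁s * Gs * U₂sᵀ) - (U₁ - U₁s * R₁) * G * U₂ᵀ -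
        U₁s * R₁ * G * (U₂ - U₂s * R₂)ᵀ := by
  have hrot : U₁s * R₁ * (R₁ᵀ * Gs * R₂) * (U₂s * R₂)ᵀ = U₁s * Gs * U₂sᵀ := by
    simp only [Matrix.transpose_mul, Matrix.mul_assoc]
    rw [← Matrix.mul_assoc R₁, hR₁, Matrix.one_mul, ← Matrix.mul_assoc R₂, hR₂, Matrix.one_mul]
  rw [Matrix.mul_sub, Matrix.sub_mul, hrot]
  simp only [Matrix.sub_mul, Matrix.mul_sub, Matrix.transpose_sub]
  abel

lemma sq_mul_sq_le_of_le_rpow {x y c σ : ℝ} (hσ : 0 ≤ σ) (hx : 0 ≤ x)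
    (hxc : x ≤ c * σ ^ ((1 : ℝ) / 4)) (hy : 0 ≤ y) (hyc : y ≤ c * σ ^ ((1 : ℝ) / 2)) :
    x ^ 2 * y ^ 2 ≤ c ^ 4 * σ ^ ((3 : ℝ) / 2) := by
  have hσ' : σ ^ ((3 : ℝ) / 2) = (σ ^ ((1 : ℝ) / 4)) ^ 2 * (σ ^ ((1 : ℝ) / 2)) ^ 2 := by
    rw [← Real.rpow_mul_natCast hσ, ← Real.rpow_mul_natCast hσ, ← Real.rpow_add' hσ] <;> norm_num
  calc x ^ 2 * y ^ 2 ≤ (c * σ ^ ((1 : ℝ) / 4)) ^ 2 * (c * σ ^ ((1 : ℝ) / 2)) ^ 2 := by gcongr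
    _ = c ^ 4 * σ ^ ((3 : ℝ) / 2) := by rw [hσ']; ring

theorem core_error_bound_general {N r₁ r₂ T₀ : ℕ}
    (G Gstar : Fin T₀ → Matrix (Fin r₁) (Fin r₂) ℝ)
    (U₁ U₁s : Matrix (Fin N) (Fin r₁) ℝ) (U₂ U₂s : Matrix (Fin N) (Fin r₂) ℝ)
    (R₁ : Matrix (Fin r₁) (Fin r₁) ℝ) (R₂ : Matrix (Fin r₂) (Fin r₂) ℝ)
    (b ce σU : ℝ) (hb : 0 < b) (hσ : 0 < σU)
    (hU1s : U₁sᵀ * U₁s = (b ^ 2) • (1 : Matrix (Fin r₁) (Fin r₁) ℝ))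
    (hU2s : U₂sᵀ * U₂s = (b ^ 2) • (1 : Matrix (Fin r₂) (Fin r₂) ℝ))
    (hR1 : R₁ᵀ * R₁ = 1) (hR2 : R₂ᵀ * R₂ = 1)
    (hU2 : opNorm U₂ ≤ (1 + ce) * σU ^ ((1 : ℝ) / 4))
    (hG1 : opNorm (mat1 G) ≤ (1 + ce) * σU ^ ((1 : ℝ) / 2))
    (hG2 : opNorm (mat2 G) ≤ (1 + ce) * σU ^ ((1 : ℝ) / 2))
    (hbσ : b ≤ (1 + ce) * σU ^ ((1 : ℝ) / 4)) :
    ∑ j, (frob (G j - R₁ᵀ * Gstar j * R₂)) ^ 2 ≤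
      3 / b ^ 4 * ∑ j, (frob (U₁ * G j * U₂ᵀ - U₁s * Gstar j * U₂sᵀ)) ^ 2 +
      3 * (1 + ce) ^ 4 * σU ^ ((3 : ℝ) / 2) / b ^ 4 *
        ((frob (U₁ - U₁s * R₁)) ^ 2 + (frob (U₂ - U₂s * R₂)) ^ 2) := by
  have hV₁ := transpose_mul_self_mul_of_orthogonal hU1s hR1
  have hV₂ := transpose_mul_self_mul_of_orthogonal hU2s hR2
  have hslices : b ^ 4 * ∑ j, frob (G j - R₁ᵀ * Gstar j * R₂) ^ 2 ≤
      3 * ∑ j, frob (U₁ * G j * U₂ᵀ - U₁s * Gstar j * U₂sᵀ) ^ 2 +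
      3 * ∑ j, frob ((U₁ - U₁s * R₁) * G j * U₂ᵀ) ^ 2 +
      3 * ∑ j, frob (U₁s * R₁ * G j * (U₂ - U₂s * R₂)ᵀ) ^ 2 := by
    simp only [Finset.mul_sum, ← Finset.sum_add_distrib]
    gcongr with j _
    rw [show b ^ 4 = b ^ 2 * b ^ 2 by ring, ← frob_mul_mul_transpose_sq hV₁ hV₂,
      mul_sub_mul_mul_transpose_eq U₁ U₁s U₂ U₂s (mul_eq_one_comm.mp hR1)
        (mul_eq_one_comm.mp hR2)]
    exact frob_sub_sub_sq_le _ _ _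
  have hY := (sum_frob_mul_mul_transpose_sq_le (U₁ - U₁s * R₁) U₂ G).trans <|
    mul_le_mul_of_nonneg_right
      (sq_mul_sq_le_of_le_rpow hσ.le (opNorm_nonneg _) hU2 (opNorm_nonneg _) hG1) (sq_nonneg _)
  have hZ := (sum_frob_mul_mul_transpose_sq_le_of_transpose_mul_self (sq_nonneg b) hV₁
    (U₂ - U₂s * R₂) G).trans <| mul_le_mul_of_nonneg_right
      (sq_mul_sq_le_of_le_rpow hσ.le hb.le hbσ (opNorm_nonneg _) hG2) (sq_nonneg _)
  rw [div_mul_eq_mul_div, div_mul_eq_mul_div, ← add_div, le_div_iff₀ (by positivity)]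
  linarith

/-- Core-tensor error bound (Lemma B.8, eq. (B.29)): for Tucker tensors
`A = G ×₁ U₁ ×₂ U₂` and `A* = G* ×₁ U₁* ×₂ U₂*` (with frontal slices `U₁ G_j U₂ᵀ` and
`U₁* G*_j U₂*ᵀ`), with `U_i*ᵀU_i* = b²I`, operator-norm bounds on `U_i` and on the
matricizations of `G`, and orthogonal rotations `R_i`:
`‖G − G* ×₁ R₁ᵀ ×₂ R₂ᵀ‖_F² ≤ 3b⁻⁴‖A − A*‖_F²
  + 3(1+c_e)⁴ σ_U^{3/2} b⁻⁴ Σᵢ ‖Uᵢ − Uᵢ* Rᵢ‖_F²`. -/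
theorem core_error_bound {N r₁ r₂ T₀ : ℕ}
    (G Gstar : Fin T₀ → Matrix (Fin r₁) (Fin r₂) ℝ)
    (U₁ U₁s : Matrix (Fin N) (Fin r₁) ℝ) (U₂ U₂s : Matrix (Fin N) (Fin r₂) ℝ)
    (R₁ : Matrix (Fin r₁) (Fin r₁) ℝ) (R₂ : Matrix (Fin r₂) (Fin r₂) ℝ)
    (b ce σU : ℝ) (hb : 0 < b) (hce : 0 < ce) (hσ : 0 < σU)
    (hU1s : U₁sᵀ * U₁s = (b ^ 2) • (1 : Matrix (Fin r₁) (Fin r₁) ℝ))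
    (hU2s : U₂sᵀ * U₂s = (b ^ 2) • (1 : Matrix (Fin r₂) (Fin r₂) ℝ))
    (hR1 : R₁ᵀ * R₁ = 1) (hR2 : R₂ᵀ * R₂ = 1)
    (hU1 : opNorm U₁ ≤ (1 + ce) * σU ^ ((1 : ℝ) / 4))
    (hU2 : opNorm U₂ ≤ (1 + ce) * σU ^ ((1 : ℝ) / 4))
    (hG1 : opNorm (mat1 G) ≤ (1 + ce) * σU ^ ((1 : ℝ) / 2))
    (hG2 : opNorm (mat2 G) ≤ (1 + ce) * σU ^ ((1 : ℝ) / 2))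
    (hbσ : b ≤ (1 + ce) * σU ^ ((1 : ℝ) / 4)) :
    ∑ j, (frob (G j - R₁ᵀ * Gstar j * R₂)) ^ 2 ≤
      3 / b ^ 4 * ∑ j, (frob (U₁ * G j * U₂ᵀ - U₁s * Gstar j * U₂sᵀ)) ^ 2 +
      3 * (1 + ce) ^ 4 * σU ^ ((3 : ℝ) / 2) / b ^ 4 *
        ((frob (U₁ - U₁s * R₁)) ^ 2 + (frob (U₂ - U₂s * R₂)) ^ 2) :=
  core_error_bound_general G Gstar U₁ U₁s U₂ U₂s R₁ R₂ b ce σU hb hσ hU1s hU2s hR1 hR2 hU2 hG1 hG2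
    hbσ
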